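/- Let n ≥ 2 and let φ : {A ∈ M_n(ℂ) : Aᵀ = A} → {B ∈ M_N(ℂ) : Bᵀ = −B} be a triple morphism from the symmetric n×n matrices to the skew-symmetric N×N matrices. Then the multiplicity of φ is even: there exist a natural number k with 2k·n ≤ N and unitary matrices U, V ∈ M_N(ℂ) such that φ(A) = U · (diag_{2k}(A) ⊕ 0) · V for every symmetric A ∈ M_n(ℂ), where diag_{2k}(A) ⊕ 0 is the N×N matrix with diag_{2k}(A) as its top-left corner block and zeros elsewhere. -/

import Mathlib

open Matrix

/-- The `N × M` matrix having the block-diagonal matrix `diag_k(A)`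
(built from `k` copies of the `n × m` matrix `A`) as its top-left corner block
and zeros elsewhere. -/
noncomputable def diagPad {n m : ℕ} (N M k : ℕ) (A : Matrix (Fin n) (Fin m) ℂ) :
    Matrix (Fin N) (Fin M) ℂ := Matrix.of fun i j =>
  if h : (i : ℕ) % n < n ∧ (j : ℕ) % m < m ∧ (i : ℕ) < k * n ∧ (j : ℕ) < k * m ∧
      (i : ℕ) / n = (j : ℕ) / m
  then A ⟨(i : ℕ) % n, h.1⟩ ⟨(j : ℕ) % m, h.2.1⟩ else 0

/-- The subspace of symmetric complex `n × n` matrices. -/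
noncomputable def symmSub (n : ℕ) : Submodule ℂ (Matrix (Fin n) (Fin n) ℂ) where
  carrier := {A | Aᵀ = A}
  add_mem' := by
    intro a b ha hb
    simp only [Set.mem_setOf_eq] at *
    rw [Matrix.transpose_add, ha, hb]
  zero_mem' := by simp
  smul_mem' := by
    intro c A hA
    simp only [Set.mem_setOf_eq] at *
    rw [Matrix.transpose_smul, hA]

/-- The subspace of skew-symmetric complex `n × n` matrices. -/
noncomputable def skewSub (n : ℕ) : Submodule ℂ (Matrix (Fin n) (Fin n) ℂ) where
  carrier := {A | Aᵀ = -A}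
  add_mem' := by
    intro a b ha hb
    simp only [Set.mem_setOf_eq] at *
    rw [Matrix.transpose_add, ha, hb, neg_add]
  zero_mem' := by simp
  smul_mem' := by
    intro c A hA
    simp only [Set.mem_setOf_eq] at *
    rw [Matrix.transpose_smul, hA, smul_neg]


/-!
Write `e = Φ 1`. The triple identity with `y = 1` makes `e` a partial isometry and
`ψ A = e* Φ A` a Jordan homomorphism (`ψ (AB + BA) = ψ A ψ B + ψ B ψ A`) with
`Φ A = e ψ A`.
The images of the symmetric units `e_ii` and `e_ij + e_ji` under a Jordan homomorphism produce,
through their Peirce decompositions, a system of matrix units `E_ij` with `ψ A = ∑ A_ij E_ij`.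
Factoring the projection `E_00 = V V*` with `V* V = 1_m`, the columns of `E_i0 V` form an isometry
`W` and `Φ A = (e W) (1_m ⊗ A) W*`; the isometries `e W` and `W` extend to unitaries. Finally
`X = Φ e_00` is skew-symmetric with `X* X = V V*`, so `Vᵀ X V` is a skew-symmetric unitary
`m × m` matrix, which forces `m` to be even.
-/

open scoped Kronecker

section TwoCancel

variable {M : Type*} [AddCommGroup M] [Module ℂ M] {a b : M}

lemma eq_of_add_self_eq_add_self (h : a + a = b + b) : a = b := by
  rw [← two_smul ℂ a, ← two_smul ℂ b] at h
  exact smul_right_injective M two_ne_zero h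

lemma half_smul_add_self (a : M) : (1 / 2 : ℂ) • (a + a) = a := by
  rw [← two_smul ℂ a, smul_smul]
  norm_num

lemma add_self_eq_of_eq_half_smul (h : a = (1 / 2 : ℂ) • b) : a + a = b := by
  rw [h, ← smul_add, half_smul_add_self]

end TwoCancel

section Idempotent

variable {R : Type*} [Ring R] {p q x : R}

lemma IsIdempotentElem.mul_mul_eq_zero_of_add_eq_self (hp : IsIdempotentElem p)
    (h : p * x + x * p = x) : p * x * p = 0 := by
  have key : p * x * p = p * x * p + p * x * p := calc
    p * x * p = p * (p * x + x * p) * p := by rw [h]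
    _ = p * p * x * p + p * x * (p * p) := by noncomm_ring
    _ = p * x * p + p * x * p := by rw [hp.eq]
  exact left_eq_add.mp key

variable [Module ℂ R]

lemma IsIdempotentElem.mul_eq_zero_of_add_eq_zero (hp : IsIdempotentElem p)
    (h : p * x + x * p = 0) : p * x = 0 ∧ x * p = 0 := by
  have hl : p * x + p * x * p = 0 := by
    simpa [mul_add, ← mul_assoc, hp.eq] using congrArg (p * ·) h
  have hr : p * x * p + x * p = 0 := by
    simpa [add_mul, mul_assoc, hp.eq] using congrArg (· * p) h
  have hcomm : p * x = x * p := by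
    rw [eq_neg_of_add_eq_zero_left hl, eq_neg_of_add_eq_zero_right hr]
  have hpx : p * x = 0 := eq_of_add_self_eq_add_self (by rw [add_zero]; nth_rw 2 [hcomm]; exact h)
  exact ⟨hpx, hcomm ▸ hpx⟩

lemma IsIdempotentElem.mul_eq_self_of_add_self_eq (hp : IsIdempotentElem p)
    (hq : IsIdempotentElem q) (h : x + x = x * q + p * x) : p * x = x ∧ x * q = x := by
  have hl : p * x = p * x * q := by
    have := congrArg (p * ·) h
    simp only [mul_add, ← mul_assoc, hp.eq] at this
    exact add_right_cancel this
  have hr : x * q = p * x * q := by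
    have := congrArg (· * q) h
    simp only [add_mul, mul_assoc, hq.eq] at this
    rw [← mul_assoc] at this
    exact add_left_cancel this
  have hpx : p * x = x := eq_of_add_self_eq_add_self (by rw [h, hr, ← hl])
  exact ⟨hpx, by rw [hr, ← hl, hpx]⟩

end Idempotent

namespace symmSub

variable {n : ℕ}

lemma coe_transpose (A : symmSub n) : (A : Matrix (Fin n) (Fin n) ℂ)ᵀ = A := A.2

noncomputable def one (n : ℕ) : symmSub n := ⟨1, transpose_one⟩

noncomputable def jordanMul (A B : symmSub n) : symmSub n :=
  ⟨A * B + B * A, by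
    change (_ + _)ᵀ = _
    rw [transpose_add, transpose_mul, transpose_mul, coe_transpose, coe_transpose, add_comm]⟩

noncomputable def diagUnit (i : Fin n) : symmSub n := ⟨single i i 1, transpose_single i i 1⟩

noncomputable def pairUnit (i j : Fin n) : symmSub n :=
  ⟨single i j 1 + single j i 1, by
    change (_ + _)ᵀ = _
    rw [transpose_add, transpose_single, transpose_single, add_comm]⟩

@[simp] lemma coe_one : (one n : Matrix (Fin n) (Fin n) ℂ) = 1 := rfl
@[simp] lemma coe_jordanMul (A B : symmSub n) :
    (jordanMul A B : Matrix (Fin n) (Fin n) ℂ) = A * B + B * A := rfl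
@[simp] lemma coe_diagUnit (i : Fin n) :
    (diagUnit i : Matrix (Fin n) (Fin n) ℂ) = single i i 1 := rfl
@[simp] lemma coe_pairUnit (i j : Fin n) :
    (pairUnit i j : Matrix (Fin n) (Fin n) ℂ) = single i j 1 + single j i 1 := rfl

lemma pairUnit_comm (i j : Fin n) : pairUnit i j = pairUnit j i :=
  Subtype.ext (add_comm _ _)

lemma pairUnit_self (i : Fin n) : pairUnit i i = (2 : ℂ) • diagUnit i :=
  Subtype.ext (by simp [two_smul])

lemma sum_diagUnit : ∑ i, diagUnit i = one n :=
  Subtype.ext (by simp [sum_single_one])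

lemma jordanMul_one_left (A : symmSub n) : jordanMul (one n) A = (2 : ℂ) • A :=
  Subtype.ext (by simp [two_smul])

lemma jordanMul_diagUnit_self (i : Fin n) :
    jordanMul (diagUnit i) (diagUnit i) = (2 : ℂ) • diagUnit i :=
  Subtype.ext (by simp [two_smul])

lemma jordanMul_diagUnit_of_ne {i j : Fin n} (h : i ≠ j) :
    jordanMul (diagUnit i) (diagUnit j) = 0 :=
  Subtype.ext (by simp [single_mul_single_of_ne _ _ _ _ h, single_mul_single_of_ne _ _ _ _ h.symm])

lemma jordanMul_diagUnit_pairUnit {i j : Fin n} (h : i ≠ j) :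
    jordanMul (diagUnit i) (pairUnit i j) = pairUnit i j :=
  Subtype.ext (by
    simp [mul_add, add_mul, single_mul_single_of_ne _ _ _ _ h,
      single_mul_single_of_ne _ _ _ _ h.symm, add_comm])

lemma jordanMul_diagUnit_pairUnit_of_ne {i j k : Fin n} (hki : k ≠ i) (hkj : k ≠ j) :
    jordanMul (diagUnit k) (pairUnit i j) = 0 :=
  Subtype.ext (by
    simp [mul_add, add_mul, single_mul_single_of_ne _ _ _ _ hki,
      single_mul_single_of_ne _ _ _ _ hkj, single_mul_single_of_ne _ _ _ _ hki.symm,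
      single_mul_single_of_ne _ _ _ _ hkj.symm])

lemma jordanMul_pairUnit_self {i j : Fin n} (h : i ≠ j) :
    jordanMul (pairUnit i j) (pairUnit i j) = (2 : ℂ) • (diagUnit i + diagUnit j) :=
  Subtype.ext (by
    simp [mul_add, add_mul, single_mul_single_of_ne _ _ _ _ h,
      single_mul_single_of_ne _ _ _ _ h.symm, two_smul]
    abel)

lemma jordanMul_pairUnit_pairUnit {i j l : Fin n} (hij : i ≠ j) (hjl : j ≠ l) (hil : i ≠ l) :
    jordanMul (pairUnit i j) (pairUnit j l) = pairUnit i l :=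
  Subtype.ext (by
    simp [mul_add, add_mul, single_mul_single_of_ne _ _ _ _ hij,
      single_mul_single_of_ne _ _ _ _ hij.symm, single_mul_single_of_ne _ _ _ _ hjl,
      single_mul_single_of_ne _ _ _ _ hjl.symm, single_mul_single_of_ne _ _ _ _ hil,
      single_mul_single_of_ne _ _ _ _ hil.symm])

lemma eq_sum_smul_pairUnit (A : symmSub n) :
    A = ∑ i, ∑ j, ((1 / 2 : ℂ) * (A : Matrix (Fin n) (Fin n) ℂ) i j) • pairUnit i j := by
  have hA : ∀ i j, (A : Matrix (Fin n) (Fin n) ℂ) j i = (A : Matrix (Fin n) (Fin n) ℂ) i j :=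
    fun i j => congrFun (congrFun (coe_transpose A) i) j
  ext a b
  simp [Matrix.sum_apply, single_apply, Finset.sum_add_distrib, ite_and, hA]
  ring

end symmSub

section JordanHom

open symmSub

variable {n : ℕ} {R : Type*} [Ring R] [Module ℂ R]

def IsJordanHom (ψ : symmSub n →ₗ[ℂ] R) : Prop :=
  ∀ A B, ψ (jordanMul A B) = ψ A * ψ B + ψ B * ψ A

/-- `ψ (diagUnit i) * ψ (pairUnit i j)` is the Peirce `(i, j)`-component of the image of
`e_ij + e_ji`. -/
noncomputable def matrixUnit (ψ : symmSub n →ₗ[ℂ] R) (i j : Fin n) : R :=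
  if i = j then ψ (diagUnit i) else ψ (diagUnit i) * ψ (pairUnit i j)

variable {ψ : symmSub n →ₗ[ℂ] R} {i j k l : Fin n}

lemma matrixUnit_self (i : Fin n) : matrixUnit ψ i i = ψ (diagUnit i) := if_pos rfl

lemma matrixUnit_of_ne (h : i ≠ j) : matrixUnit ψ i j = ψ (diagUnit i) * ψ (pairUnit i j) :=
  if_neg h

namespace IsJordanHom

lemma isIdempotentElem_diagUnit (hψ : IsJordanHom ψ) (i : Fin n) :
    IsIdempotentElem (ψ (diagUnit i)) := by
  have h := hψ (diagUnit i) (diagUnit i)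
  rw [jordanMul_diagUnit_self, map_smul, two_smul] at h
  exact (eq_of_add_self_eq_add_self h).symm

lemma diagUnit_mul_diagUnit_of_ne (hψ : IsJordanHom ψ) (h : i ≠ j) :
    ψ (diagUnit i) * ψ (diagUnit j) = 0 := by
  have hij := hψ (diagUnit i) (diagUnit j)
  rw [jordanMul_diagUnit_of_ne h, map_zero] at hij
  exact ((hψ.isIdempotentElem_diagUnit i).mul_eq_zero_of_add_eq_zero hij.symm).1

lemma map_one_mul_and_mul_map_one (hψ : IsJordanHom ψ) (A : symmSub n) :
    ψ (one n) * ψ A = ψ A ∧ ψ A * ψ (one n) = ψ A := by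
  have h1 := hψ (one n) (one n)
  rw [jordanMul_one_left, map_smul, two_smul] at h1
  have hone : IsIdempotentElem (ψ (one n)) := (eq_of_add_self_eq_add_self h1).symm
  have hA := hψ (one n) A
  rw [jordanMul_one_left, map_smul, two_smul, add_comm (ψ (one n) * ψ A)] at hA
  exact hone.mul_eq_self_of_add_self_eq hone hA

lemma diagUnit_mul_pairUnit_add (hψ : IsJordanHom ψ) (h : i ≠ j) :
    ψ (diagUnit i) * ψ (pairUnit i j) + ψ (pairUnit i j) * ψ (diagUnit i) =
      ψ (pairUnit i j) := by
  rw [← hψ, jordanMul_diagUnit_pairUnit h]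

lemma diagUnit_mul_pairUnit_of_ne (hψ : IsJordanHom ψ) (hki : k ≠ i) (hkj : k ≠ j) :
    ψ (diagUnit k) * ψ (pairUnit i j) = 0 ∧ ψ (pairUnit i j) * ψ (diagUnit k) = 0 := by
  have h := hψ (diagUnit k) (pairUnit i j)
  rw [jordanMul_diagUnit_pairUnit_of_ne hki hkj, map_zero] at h
  exact (hψ.isIdempotentElem_diagUnit k).mul_eq_zero_of_add_eq_zero h.symm

lemma pairUnit_eq_add (hψ : IsJordanHom ψ) (h : i ≠ j) :
    ψ (pairUnit i j) =
        ψ (diagUnit i) * ψ (pairUnit i j) + ψ (diagUnit j) * ψ (pairUnit i j) ∧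
      ψ (pairUnit i j) =
        ψ (pairUnit i j) * ψ (diagUnit i) + ψ (pairUnit i j) * ψ (diagUnit j) := by
  obtain ⟨hl, hr⟩ := hψ.map_one_mul_and_mul_map_one (pairUnit i j)
  rw [← symmSub.sum_diagUnit, map_sum] at hl hr
  rw [Finset.sum_mul] at hl
  rw [Finset.mul_sum] at hr
  exact ⟨hl.symm.trans (Fintype.sum_eq_add i j h fun k hk =>
      (hψ.diagUnit_mul_pairUnit_of_ne hk.1 hk.2).1),
    hr.symm.trans (Fintype.sum_eq_add i j h fun k hk =>
      (hψ.diagUnit_mul_pairUnit_of_ne hk.1 hk.2).2)⟩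

lemma pairUnit_mul_diagUnit (hψ : IsJordanHom ψ) (h : i ≠ j) :
    ψ (pairUnit i j) * ψ (diagUnit i) = ψ (diagUnit j) * ψ (pairUnit i j) :=
  add_left_cancel ((hψ.diagUnit_mul_pairUnit_add h).trans (hψ.pairUnit_eq_add h).1)

lemma diagUnit_mul_pairUnit_mul_diagUnit (hψ : IsJordanHom ψ) (h : i ≠ j) :
    ψ (diagUnit i) * ψ (pairUnit i j) * ψ (diagUnit j) =
      ψ (diagUnit i) * ψ (pairUnit i j) := by
  have hii := (hψ.isIdempotentElem_diagUnit i).mul_mul_eq_zero_of_add_eq_self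
    (hψ.diagUnit_mul_pairUnit_add h)
  have := congrArg (ψ (diagUnit i) * ·) (hψ.pairUnit_eq_add h).2
  simp only [mul_add, ← mul_assoc, hii, zero_add] at this
  exact this.symm

lemma pairUnit_mul_self (hψ : IsJordanHom ψ) (h : i ≠ j) :
    ψ (pairUnit i j) * ψ (pairUnit i j) = ψ (diagUnit i) + ψ (diagUnit j) := by
  have hii := hψ (pairUnit i j) (pairUnit i j)
  rw [jordanMul_pairUnit_self h, map_smul, two_smul, map_add] at hii
  exact (eq_of_add_self_eq_add_self hii).symm

lemma pairUnit_mul_pairUnit_add (hψ : IsJordanHom ψ) (hij : i ≠ j) (hjl : j ≠ l)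
    (hil : i ≠ l) :
    ψ (pairUnit i j) * ψ (pairUnit j l) + ψ (pairUnit j l) * ψ (pairUnit i j) =
      ψ (pairUnit i l) := by
  rw [← hψ, jordanMul_pairUnit_pairUnit hij hjl hil]

lemma diagUnit_mul_matrixUnit (hψ : IsJordanHom ψ) (i j : Fin n) :
    ψ (diagUnit i) * matrixUnit ψ i j = matrixUnit ψ i j := by
  by_cases hij : i = j
  · subst hij
    rw [matrixUnit_self, (hψ.isIdempotentElem_diagUnit i).eq]
  · rw [matrixUnit_of_ne hij, ← mul_assoc, (hψ.isIdempotentElem_diagUnit i).eq]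

lemma diagUnit_mul_matrixUnit_of_ne (hψ : IsJordanHom ψ) (h : k ≠ i) (j : Fin n) :
    ψ (diagUnit k) * matrixUnit ψ i j = 0 := by
  rw [← hψ.diagUnit_mul_matrixUnit, ← mul_assoc, hψ.diagUnit_mul_diagUnit_of_ne h, zero_mul]

lemma matrixUnit_mul_diagUnit (hψ : IsJordanHom ψ) (i j : Fin n) :
    matrixUnit ψ i j * ψ (diagUnit j) = matrixUnit ψ i j := by
  by_cases hij : i = j
  · subst hij
    rw [matrixUnit_self, (hψ.isIdempotentElem_diagUnit i).eq]
  · rw [matrixUnit_of_ne hij, hψ.diagUnit_mul_pairUnit_mul_diagUnit hij]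

lemma matrixUnit_mul_diagUnit_of_ne (hψ : IsJordanHom ψ) (i : Fin n) (h : j ≠ k) :
    matrixUnit ψ i j * ψ (diagUnit k) = 0 := by
  by_cases hij : i = j
  · subst hij
    rw [matrixUnit_self, hψ.diagUnit_mul_diagUnit_of_ne h]
  rw [matrixUnit_of_ne hij, mul_assoc]
  by_cases hki : k = i
  · subst hki
    rw [← mul_assoc, (hψ.isIdempotentElem_diagUnit k).mul_mul_eq_zero_of_add_eq_self
      (hψ.diagUnit_mul_pairUnit_add hij)]
  · rw [(hψ.diagUnit_mul_pairUnit_of_ne hki (Ne.symm h)).2, mul_zero]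

lemma matrixUnit_mul_matrixUnit_self (hψ : IsJordanHom ψ) (i j l : Fin n) :
    matrixUnit ψ i j * matrixUnit ψ j l = matrixUnit ψ i l := by
  by_cases hij : i = j
  · subst hij
    rw [matrixUnit_self, hψ.diagUnit_mul_matrixUnit]
  by_cases hjl : j = l
  · subst hjl
    rw [matrixUnit_self, hψ.matrixUnit_mul_diagUnit]
  rw [matrixUnit_of_ne hij, matrixUnit_of_ne hjl, ← mul_assoc,
    hψ.diagUnit_mul_pairUnit_mul_diagUnit hij, mul_assoc]
  by_cases hil : i = l
  · subst hil
    rw [matrixUnit_self, pairUnit_comm j i, hψ.pairUnit_mul_self hij, mul_add,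
      (hψ.isIdempotentElem_diagUnit i).eq, hψ.diagUnit_mul_diagUnit_of_ne hij, add_zero]
  · rw [matrixUnit_of_ne hil, ← hψ.pairUnit_mul_pairUnit_add hij hjl hil, mul_add,
      ← mul_assoc (ψ (diagUnit i)) (ψ (pairUnit j l)),
      (hψ.diagUnit_mul_pairUnit_of_ne hij hil).1, zero_mul, add_zero]

theorem matrixUnit_mul (hψ : IsJordanHom ψ) (i j k l : Fin n) :
    matrixUnit ψ i j * matrixUnit ψ k l = if j = k then matrixUnit ψ i l else 0 := by
  split_ifs with hjk
  · subst hjk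
    exact hψ.matrixUnit_mul_matrixUnit_self i j l
  · rw [← hψ.diagUnit_mul_matrixUnit k l, ← mul_assoc,
      hψ.matrixUnit_mul_diagUnit_of_ne i hjk, zero_mul]

lemma pairUnit_eq_matrixUnit_add (hψ : IsJordanHom ψ) (i j : Fin n) :
    ψ (pairUnit i j) = matrixUnit ψ i j + matrixUnit ψ j i := by
  by_cases hij : i = j
  · subst hij
    rw [matrixUnit_self, pairUnit_self, map_smul, two_smul]
  · rw [matrixUnit_of_ne hij, matrixUnit_of_ne (Ne.symm hij), pairUnit_comm j i]
    exact (hψ.pairUnit_eq_add hij).1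

theorem eq_sum_smul_matrixUnit (hψ : IsJordanHom ψ) (A : symmSub n) :
    ψ A = ∑ i, ∑ j, (A : Matrix (Fin n) (Fin n) ℂ) i j • matrixUnit ψ i j := by
  have hA : ∀ i j, (A : Matrix (Fin n) (Fin n) ℂ) j i = (A : Matrix (Fin n) (Fin n) ℂ) i j :=
    fun i j => congrFun (congrFun (coe_transpose A) i) j
  have hS : ∑ i, ∑ j, (A : Matrix (Fin n) (Fin n) ℂ) i j • matrixUnit ψ j i =
      ∑ i, ∑ j, (A : Matrix (Fin n) (Fin n) ℂ) i j • matrixUnit ψ i j := by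
    rw [Finset.sum_comm]
    simp only [hA]
  conv_lhs => rw [eq_sum_smul_pairUnit A]
  simp only [map_sum, map_smul, hψ.pairUnit_eq_matrixUnit_add, smul_add, Finset.sum_add_distrib,
    mul_smul, ← Finset.smul_sum, hS]
  exact add_self_eq_of_eq_half_smul rfl

lemma one_mul_matrixUnit (hψ : IsJordanHom ψ) (i j : Fin n) :
    ψ (one n) * matrixUnit ψ i j = matrixUnit ψ i j := by
  rw [← symmSub.sum_diagUnit, map_sum, Finset.sum_mul,
    Fintype.sum_eq_single i fun k hk => hψ.diagUnit_mul_matrixUnit_of_ne hk j,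
    hψ.diagUnit_mul_matrixUnit]

theorem star_matrixUnit [StarRing R] (hψ : IsJordanHom ψ)
    (hsa : ∀ A : symmSub n, (A : Matrix (Fin n) (Fin n) ℂ)ᴴ = A → IsSelfAdjoint (ψ A))
    (i j : Fin n) : star (matrixUnit ψ i j) = matrixUnit ψ j i := by
  have hd : ∀ k, IsSelfAdjoint (ψ (diagUnit k)) := fun k => hsa _ (by simp)
  by_cases hij : i = j
  · subst hij
    rw [matrixUnit_self]
    exact (hd i).star_eq
  · have hf : IsSelfAdjoint (ψ (pairUnit i j)) := hsa _ (by simp [add_comm])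
    rw [matrixUnit_of_ne hij, matrixUnit_of_ne (Ne.symm hij), star_mul, hf.star_eq,
      (hd i).star_eq, hψ.pairUnit_mul_diagUnit hij, pairUnit_comm]

end IsJordanHom

end JordanHom

section TripleMorphism

open symmSub

variable {n : ℕ} {R : Type*} [Ring R] [StarRing R] [Algebra ℂ R]

def IsTripleMorphism (Φ : symmSub n →ₗ[ℂ] R) : Prop :=
  ∀ x y z w : symmSub n,
    (w : Matrix (Fin n) (Fin n) ℂ) =
        (1 / 2 : ℂ) • ((x : Matrix (Fin n) (Fin n) ℂ) * (y : Matrix (Fin n) (Fin n) ℂ)ᴴ *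
            (z : Matrix (Fin n) (Fin n) ℂ) +
          (z : Matrix (Fin n) (Fin n) ℂ) * (y : Matrix (Fin n) (Fin n) ℂ)ᴴ *
            (x : Matrix (Fin n) (Fin n) ℂ)) →
      Φ w = (1 / 2 : ℂ) • (Φ x * star (Φ y) * Φ z + Φ z * star (Φ y) * Φ x)

noncomputable def jordanPart (Φ : symmSub n →ₗ[ℂ] R) : symmSub n →ₗ[ℂ] R :=
  LinearMap.mulLeft ℂ (star (Φ (one n))) ∘ₗ Φ

lemma jordanPart_apply (Φ : symmSub n →ₗ[ℂ] R) (A : symmSub n) :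
    jordanPart Φ A = star (Φ (one n)) * Φ A := rfl

namespace IsTripleMorphism

variable {Φ : symmSub n →ₗ[ℂ] R}

lemma mul_star_mul_self (hΦ : IsTripleMorphism Φ) :
    Φ (one n) * star (Φ (one n)) * Φ (one n) = Φ (one n) := by
  have h := hΦ (one n) (one n) (one n) (one n)
    (by simp only [coe_one, conjTranspose_one, mul_one, half_smul_add_self])
  exact (eq_of_add_self_eq_add_self (add_self_eq_of_eq_half_smul h)).symm

lemma mul_star_mul_apply_and_apply_mul_star_mul (hΦ : IsTripleMorphism Φ) (A : symmSub n) :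
    Φ (one n) * star (Φ (one n)) * Φ A = Φ A ∧
      Φ A * (star (Φ (one n)) * Φ (one n)) = Φ A := by
  have he := hΦ.mul_star_mul_self
  have hl : IsIdempotentElem (Φ (one n) * star (Φ (one n))) := by
    rw [IsIdempotentElem, ← mul_assoc, he]
  have hr : IsIdempotentElem (star (Φ (one n)) * Φ (one n)) := by
    rw [IsIdempotentElem, mul_assoc, ← mul_assoc (Φ (one n)), he]
  have h := add_self_eq_of_eq_half_smul
    (hΦ A (one n) (one n) A
      (by simp only [coe_one, conjTranspose_one, mul_one, one_mul, half_smul_add_self]))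
  exact hl.mul_eq_self_of_add_self_eq hr (by rw [h, mul_assoc (Φ A)])

lemma mul_jordanPart (hΦ : IsTripleMorphism Φ) (A : symmSub n) :
    Φ (one n) * jordanPart Φ A = Φ A := by
  rw [jordanPart_apply, ← mul_assoc]
  exact (hΦ.mul_star_mul_apply_and_apply_mul_star_mul A).1

theorem isJordanHom_jordanPart (hΦ : IsTripleMorphism Φ) : IsJordanHom (jordanPart Φ) := by
  intro A B
  have h := hΦ A (one n) B ((1 / 2 : ℂ) • jordanMul A B) (by simp)
  rw [map_smul] at h
  have h' := smul_right_injective R (by norm_num : (1 / 2 : ℂ) ≠ 0) h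
  simp only [jordanPart_apply, h', mul_add, mul_assoc]

theorem isSelfAdjoint_jordanPart (hΦ : IsTripleMorphism Φ) (A : symmSub n)
    (hA : (A : Matrix (Fin n) (Fin n) ℂ)ᴴ = A) : IsSelfAdjoint (jordanPart Φ A) := by
  have h := hΦ (one n) A (one n) A
    (by simp only [coe_one, hA, mul_one, one_mul, half_smul_add_self])
  rw [half_smul_add_self] at h
  have h' := congrArg star (hΦ.mul_star_mul_apply_and_apply_mul_star_mul A).2
  rw [star_mul, star_mul, star_star] at h'
  rw [IsSelfAdjoint, jordanPart_apply, star_mul, star_star]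
  conv_rhs => rw [h]
  rw [← mul_assoc, ← mul_assoc, h']

theorem star_matrixUnit_jordanPart (hΦ : IsTripleMorphism Φ) (i j : Fin n) :
    star (matrixUnit (jordanPart Φ) i j) = matrixUnit (jordanPart Φ) j i :=
  hΦ.isJordanHom_jordanPart.star_matrixUnit hΦ.isSelfAdjoint_jordanPart i j

lemma star_mul_self_mul_matrixUnit (hΦ : IsTripleMorphism Φ) (i j : Fin n) :
    star (Φ (one n)) * Φ (one n) * matrixUnit (jordanPart Φ) i j =
      matrixUnit (jordanPart Φ) i j :=
  hΦ.isJordanHom_jordanPart.one_mul_matrixUnit i j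

theorem eq_mul_sum_smul_matrixUnit (hΦ : IsTripleMorphism Φ) (A : symmSub n) :
    Φ A = Φ (one n) *
      ∑ i, ∑ j, (A : Matrix (Fin n) (Fin n) ℂ) i j • matrixUnit (jordanPart Φ) i j := by
  rw [← hΦ.isJordanHom_jordanPart.eq_sum_smul_matrixUnit, hΦ.mul_jordanPart]

lemma star_apply_diagUnit_mul_self (hΦ : IsTripleMorphism Φ) (i : Fin n) :
    star (Φ (diagUnit i)) * Φ (diagUnit i) = matrixUnit (jordanPart Φ) i i := by
  rw [← hΦ.mul_jordanPart, ← matrixUnit_self (ψ := jordanPart Φ), star_mul, mul_assoc,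
    ← mul_assoc (star _) (Φ _), hΦ.star_mul_self_mul_matrixUnit, hΦ.star_matrixUnit_jordanPart,
    hΦ.isJordanHom_jordanPart.matrixUnit_mul, if_pos rfl]

end IsTripleMorphism

end TripleMorphism

section Isometries

variable {ν : Type*} [Fintype ν]

theorem exists_isometry_mul_conjTranspose_eq [DecidableEq ν] {P : Matrix ν ν ℂ}
    (hP : IsIdempotentElem P) (hPh : P.IsHermitian) :
    ∃ (m : ℕ) (V : Matrix ν (Fin m) ℂ), Vᴴ * V = 1 ∧ V * Vᴴ = P := by
  have hp : (toEuclideanLin P).IsSymmetricProjection := by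
    refine ⟨?_, isSymmetric_toEuclideanLin_iff.mpr hPh⟩
    ext x : 1
    simp [Module.End.mul_apply, toLpLin_apply, mulVec_mulVec, hP.eq]
  obtain ⟨_, hpK⟩ := LinearMap.isSymmetricProjection_iff_eq_coe_starProjection_range.mp hp
  let b := stdOrthonormalBasis ℂ (LinearMap.range (toEuclideanLin P))
  refine ⟨_, of fun r a => (b a : EuclideanSpace ℂ ν) r, ?_, ?_⟩
  · ext a a'
    simpa [mul_apply, one_apply, EuclideanSpace.inner_eq_star_dotProduct, dotProduct, mul_comm]
      using orthonormal_iff_ite.mp b.orthonormal a a'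
  · ext r c
    have := congrArg (fun f => f (EuclideanSpace.single c 1) r) hpK
    simp [b.starProjection_eq_sum_rankOne, EuclideanSpace.inner_single_right] at this
    simp [mul_apply, this, mul_comm]

theorem even_of_transpose_eq_neg {m : ℕ} {X : Matrix ν ν ℂ} (hX : Xᵀ = -X)
    {V : Matrix ν (Fin m) ℂ} (hV : Vᴴ * V = 1) (hXV : Xᴴ * X = V * Vᴴ) : Even m := by
  set T := Vᵀ * X * V
  have hT : Tᵀ = -T := by simp [T, transpose_mul, hX, Matrix.mul_assoc]
  -- `(V Vᴴ)ᵀ = (Xᴴ X)ᵀ = X Xᴴ` because `Xᵀ = -X`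
  have hconj : Vᵀᴴ * Vᵀ = X * Xᴴ := by
    rw [transpose_conjTranspose, ← conjTranspose_transpose, ← transpose_mul, ← hXV,
      transpose_mul, conjTranspose_transpose, ← transpose_conjTranspose, hX, conjTranspose_neg,
      neg_mul_neg]
  have hunit : Tᴴ * T = 1 := calc
    Tᴴ * T = Vᴴ * (Xᴴ * (Vᵀᴴ * Vᵀ) * X) * V := by
      simp only [T, conjTranspose_mul, Matrix.mul_assoc]
    _ = Vᴴ * ((Xᴴ * X) * (Xᴴ * X)) * V := by
      rw [hconj]
      simp only [Matrix.mul_assoc]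
    _ = (Vᴴ * V) * (Vᴴ * V) * (Vᴴ * V) := by
      rw [hXV]
      simp only [Matrix.mul_assoc]
    _ = 1 := by rw [hV, Matrix.one_mul, Matrix.one_mul]
  have hdet : T.det ≠ 0 := fun h => by
    simpa [h] using congrArg det hunit
  by_contra hodd
  apply hdet
  have h := congrArg det hT
  rw [det_transpose, det_neg, Fintype.card_fin, (Nat.not_even_iff_odd.mp hodd).neg_one_pow,
    neg_one_mul] at h
  exact CharZero.eq_neg_self_iff.mp h

theorem card_le_of_conjTranspose_mul_self_eq_one {ι : Type*} [Fintype ι] [DecidableEq ι]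
    {Y : Matrix ν ι ℂ} (hY : Yᴴ * Y = 1) : Fintype.card ι ≤ Fintype.card ν := calc
  Fintype.card ι = (Yᴴ * Y).rank := by rw [hY, rank_one]
  _ ≤ Y.rank := rank_mul_le_right _ _
  _ ≤ Fintype.card ν := rank_le_card_height Y

theorem exists_unitary_submatrix_eq [DecidableEq ν] {ι : Type*} [Fintype ι] [DecidableEq ι]
    {Y : Matrix ν ι ℂ} (hY : Yᴴ * Y = 1) {g : ι → ν} (hg : Function.Injective g) :
    ∃ U ∈ unitaryGroup ν ℂ, U.submatrix id g = Y := by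
  let v : ν → EuclideanSpace ℂ ν :=
    Function.extend g (fun p => WithLp.toLp 2 fun r => Y r p) 0
  have hv : Orthonormal ℂ ((Set.range g).domRestrict v) := by
    rw [orthonormal_iff_ite]
    rintro ⟨_, p, rfl⟩ ⟨_, q, rfl⟩
    have := congrFun (congrFun hY p) q
    change inner ℂ (v (g p)) (v (g q)) = _
    simp only [v, hg.extend_apply, Subtype.ext_iff, hg.eq_iff]
    simpa [EuclideanSpace.inner_eq_star_dotProduct, dotProduct, mul_apply, one_apply, mul_comm]
      using this
  obtain ⟨b, hb⟩ := hv.exists_orthonormalBasis_extension_of_card_eq (by simp)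
  refine ⟨(EuclideanSpace.basisFun ν ℂ).toBasis.toMatrix b,
    (EuclideanSpace.basisFun ν ℂ).toMatrix_orthonormalBasis_mem_unitary b, ?_⟩
  ext r p
  simp [Module.Basis.toMatrix_apply, hb (g p) ⟨p, rfl⟩, v, hg.extend_apply]

end Isometries

section BlockColumns

variable {ρ ι κ α : Type*} [CommRing α]

def blockCols (Y : κ → Matrix ρ ι α) : Matrix ρ (ι × κ) α := of fun r p => Y p.2 r p.1

lemma mul_blockCols {ρ' : Type*} [Fintype ρ] (M : Matrix ρ' ρ α) (Y : κ → Matrix ρ ι α) :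
    M * blockCols Y = blockCols fun k => M * Y k := by
  ext r p
  simp [blockCols, mul_apply]

lemma conjTranspose_blockCols_mul_blockCols [StarRing α] [Fintype ρ]
    (Y Z : κ → Matrix ρ ι α) :
    (blockCols Y)ᴴ * blockCols Z = of fun p q => ((Y p.2)ᴴ * Z q.2) p.1 q.1 := by
  ext p q
  simp [blockCols, mul_apply]

lemma blockCols_mul_one_kronecker_mul_conjTranspose [StarRing α] [Fintype ι] [DecidableEq ι]
    [Fintype κ] (Y Z : κ → Matrix ρ ι α) (A : Matrix κ κ α) :
    blockCols Y * ((1 : Matrix ι ι α) ⊗ₖ A) * (blockCols Z)ᴴ =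
      ∑ k, ∑ l, A k l • (Y k * (Z l)ᴴ) := by
  ext r c
  simp [blockCols, mul_apply, Matrix.sum_apply, Fintype.sum_prod_type, kroneckerMap_apply,
    one_apply, Finset.sum_mul, Finset.mul_sum]
  refine ((Finset.sum_congr rfl fun i _ => Finset.sum_comm).trans Finset.sum_comm).trans
    (Finset.sum_congr rfl fun k _ => Finset.sum_comm.trans
      (Finset.sum_congr rfl fun l _ => Finset.sum_congr rfl fun i _ => by ring))

end BlockColumns

section MatrixUnits

variable {n N m : ℕ} {E : Fin n → Fin n → Matrix (Fin N) (Fin N) ℂ}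
  {V : Matrix (Fin N) (Fin m) ℂ}

theorem conjTranspose_mul_self_blockCols_of_matrixUnits
    (hmul : ∀ i j k l, E i j * E k l = if j = k then E i l else 0)
    (hstar : ∀ i j, (E i j)ᴴ = E j i) (i₀ : Fin n) (hV : Vᴴ * V = 1)
    (hVE : V * Vᴴ = E i₀ i₀) :
    (blockCols fun i => E i i₀ * V)ᴴ * blockCols (fun i => E i i₀ * V) = 1 := by
  have key : ∀ i j, (E i i₀ * V)ᴴ * (E j i₀ * V) = if i = j then 1 else 0 := by
    intro i j
    rw [conjTranspose_mul, hstar, Matrix.mul_assoc, ← Matrix.mul_assoc (E i₀ i), hmul]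
    split_ifs
    · rw [← hVE, ← Matrix.mul_assoc, ← Matrix.mul_assoc, hV, Matrix.one_mul, hV]
    · rw [Matrix.zero_mul, Matrix.mul_zero]
  rw [conjTranspose_blockCols_mul_blockCols]
  ext ⟨a, i⟩ ⟨b, j⟩
  simp only [of_apply, key, one_apply, Prod.mk.injEq]
  by_cases hij : i = j <;> simp [hij, one_apply]

theorem blockCols_mul_one_kronecker_mul_conjTranspose_of_matrixUnits
    (hmul : ∀ i j k l, E i j * E k l = if j = k then E i l else 0)
    (hstar : ∀ i j, (E i j)ᴴ = E j i) (i₀ : Fin n) (hVE : V * Vᴴ = E i₀ i₀)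
    (A : Matrix (Fin n) (Fin n) ℂ) :
    blockCols (fun i => E i i₀ * V) * ((1 : Matrix (Fin m) (Fin m) ℂ) ⊗ₖ A) *
      (blockCols fun i => E i i₀ * V)ᴴ = ∑ i, ∑ j, A i j • E i j := by
  rw [blockCols_mul_one_kronecker_mul_conjTranspose]
  refine Finset.sum_congr rfl fun i _ => Finset.sum_congr rfl fun j _ => ?_
  rw [conjTranspose_mul, hstar, Matrix.mul_assoc, ← Matrix.mul_assoc V, hVE,
    ← Matrix.mul_assoc, hmul, if_pos rfl, hmul, if_pos rfl]

end MatrixUnits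

lemma one_submatrix_mul_mul_conjTranspose_apply {κ ι α : Type*} [Fintype ι] [DecidableEq κ]
    [CommRing α] [StarRing α] {g : ι → κ} (hg : Function.Injective g)
    (M : Matrix ι ι α) (p q : ι) :
    ((1 : Matrix κ κ α).submatrix id g * M * ((1 : Matrix κ κ α).submatrix id g)ᴴ)
      (g p) (g q) = M p q := by
  classical
  simp [mul_apply, one_apply, hg.eq_iff]

section DiagPad

variable {m n N : ℕ}

def blockIndex (h : m * n ≤ N) (p : Fin m × Fin n) : Fin N := Fin.castLE h (finProdFinEquiv p)

lemma blockIndex_injective (h : m * n ≤ N) : Function.Injective (blockIndex h) :=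
  (Fin.castLE_injective h).comp finProdFinEquiv.injective

lemma val_blockIndex (h : m * n ≤ N) (p : Fin m × Fin n) :
    (blockIndex h p : ℕ) = p.2 + n * p.1 := rfl

lemma exists_blockIndex_eq (h : m * n ≤ N) {r : Fin N} (hr : (r : ℕ) < m * n) :
    ∃ p, blockIndex h p = r :=
  ⟨finProdFinEquiv.symm ⟨r, hr⟩, by ext; simp [blockIndex, Nat.mod_add_div]⟩

lemma diagPad_blockIndex (h : m * n ≤ N) (A : Matrix (Fin n) (Fin n) ℂ) (p q : Fin m × Fin n) :
    diagPad N N m A (blockIndex h p) (blockIndex h q) =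
      ((1 : Matrix (Fin m) (Fin m) ℂ) ⊗ₖ A) p q := by
  obtain ⟨a, i⟩ := p
  obtain ⟨b, j⟩ := q
  have hn : 0 < n := i.pos
  have hdiv : ∀ (a : Fin m) (i : Fin n), ((i : ℕ) + n * a) / n = a := fun a i => by
    rw [Nat.add_mul_div_left _ _ hn, Nat.div_eq_of_lt i.2, zero_add]
  have hmod : ∀ (a : Fin m) (i : Fin n), ((i : ℕ) + n * a) % n = i := fun a i => by
    rw [Nat.add_mul_mod_self_left, Nat.mod_eq_of_lt i.2]
  have hai : (i : ℕ) + n * a < m * n := (finProdFinEquiv (a, i)).2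
  have hbj : (j : ℕ) + n * b < m * n := (finProdFinEquiv (b, j)).2
  simp [diagPad, val_blockIndex, hdiv, hmod, kroneckerMap_apply, one_apply, Fin.val_inj, hai, hbj]

theorem diagPad_eq_mul_one_kronecker_mul (h : m * n ≤ N) (A : Matrix (Fin n) (Fin n) ℂ) :
    diagPad N N m A = (1 : Matrix (Fin N) (Fin N) ℂ).submatrix id (blockIndex h) *
      ((1 : Matrix (Fin m) (Fin m) ℂ) ⊗ₖ A) *
      ((1 : Matrix (Fin N) (Fin N) ℂ).submatrix id (blockIndex h))ᴴ := by
  have hlt : ∀ p, (blockIndex h p : ℕ) < m * n := fun p => (finProdFinEquiv p).2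
  ext r c
  by_cases hr : (r : ℕ) < m * n
  · by_cases hc : (c : ℕ) < m * n
    · obtain ⟨p, rfl⟩ := exists_blockIndex_eq h hr
      obtain ⟨q, rfl⟩ := exists_blockIndex_eq h hc
      rw [diagPad_blockIndex, one_submatrix_mul_mul_conjTranspose_apply (blockIndex_injective h)]
    · have hc' : ∀ q, blockIndex h q ≠ c := fun q hq => hc (hq ▸ hlt q)
      simp [diagPad, hc, mul_apply, one_apply, hc']
  · have hr' : ∀ p, r ≠ blockIndex h p := fun p hp => hr (hp ▸ hlt p)
    simp [diagPad, hr, mul_apply, one_apply, hr']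

end DiagPad

theorem exists_unitary_mul_diagPad_mul {m n N : ℕ} {Y Z : Matrix (Fin N) (Fin m × Fin n) ℂ}
    (hY : Yᴴ * Y = 1) (hZ : Zᴴ * Z = 1) :
    m * n ≤ N ∧ ∃ U ∈ unitaryGroup (Fin N) ℂ, ∃ V ∈ unitaryGroup (Fin N) ℂ,
      ∀ A : Matrix (Fin n) (Fin n) ℂ,
        Y * ((1 : Matrix (Fin m) (Fin m) ℂ) ⊗ₖ A) * Zᴴ = U * diagPad N N m A * V := by
  have hmn : m * n ≤ N := by simpa using card_le_of_conjTranspose_mul_self_eq_one hY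
  obtain ⟨U, hU, rfl⟩ := exists_unitary_submatrix_eq hY (blockIndex_injective hmn)
  obtain ⟨W, hW, rfl⟩ := exists_unitary_submatrix_eq hZ (blockIndex_injective hmn)
  refine ⟨hmn, U, hU, star W, Unitary.star_mem hW, fun A => ?_⟩
  have hsub : ∀ X : Matrix (Fin N) (Fin N) ℂ, X.submatrix id (blockIndex hmn) =
      X * (1 : Matrix (Fin N) (Fin N) ℂ).submatrix id (blockIndex hmn) := fun X => by
    simpa using (mul_submatrix_one (Equiv.refl (Fin N)) (blockIndex hmn) X).symm
  rw [diagPad_eq_mul_one_kronecker_mul hmn, hsub U, hsub W, conjTranspose_mul,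
    star_eq_conjTranspose]
  simp only [Matrix.mul_assoc]

section TripleMorphismMatrix

open symmSub

variable {n N m : ℕ} {Φ : symmSub n →ₗ[ℂ] Matrix (Fin N) (Fin N) ℂ}
  {V : Matrix (Fin N) (Fin m) ℂ}

namespace IsTripleMorphism

lemma conjTranspose_matrixUnit_jordanPart (hΦ : IsTripleMorphism Φ) (i j : Fin n) :
    (matrixUnit (jordanPart Φ) i j)ᴴ = matrixUnit (jordanPart Φ) j i :=
  hΦ.star_matrixUnit_jordanPart i j

lemma isIdempotentElem_matrixUnit_self (hΦ : IsTripleMorphism Φ) (i : Fin n) :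
    IsIdempotentElem (matrixUnit (jordanPart Φ) i i) := by
  rw [IsIdempotentElem, hΦ.isJordanHom_jordanPart.matrixUnit_mul, if_pos rfl]

theorem exists_isometries_eq_mul_one_kronecker_mul (hΦ : IsTripleMorphism Φ) (i₀ : Fin n)
    (hV : Vᴴ * V = 1) (hVE : V * Vᴴ = matrixUnit (jordanPart Φ) i₀ i₀) :
    ∃ Y Z : Matrix (Fin N) (Fin m × Fin n) ℂ, Yᴴ * Y = 1 ∧ Zᴴ * Z = 1 ∧
      ∀ A : symmSub n,
        Φ A = Y * ((1 : Matrix (Fin m) (Fin m) ℂ) ⊗ₖ (A : Matrix (Fin n) (Fin n) ℂ)) *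
          Zᴴ := by
  have hmul := hΦ.isJordanHom_jordanPart.matrixUnit_mul
  have hstar := hΦ.conjTranspose_matrixUnit_jordanPart
  set W := blockCols fun i => matrixUnit (jordanPart Φ) i i₀ * V
  have hW : Wᴴ * W = 1 := conjTranspose_mul_self_blockCols_of_matrixUnits hmul hstar i₀ hV hVE
  have hQW : (Φ (one n))ᴴ * Φ (one n) * W = W := by
    simp only [W, mul_blockCols, ← Matrix.mul_assoc, ← star_eq_conjTranspose,
      hΦ.star_mul_self_mul_matrixUnit]
  refine ⟨Φ (one n) * W, W, ?_, hW, fun A => ?_⟩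
  · rw [conjTranspose_mul, Matrix.mul_assoc, ← Matrix.mul_assoc _ _ W, hQW, hW]
  · rw [hΦ.eq_mul_sum_smul_matrixUnit A, Matrix.mul_assoc, Matrix.mul_assoc,
      ← Matrix.mul_assoc W,
      blockCols_mul_one_kronecker_mul_conjTranspose_of_matrixUnits hmul hstar i₀ hVE]

theorem even_of_transpose_eq_neg (hΦ : IsTripleMorphism Φ)
    (hskew : ∀ A, (Φ A)ᵀ = -Φ A) (i₀ : Fin n)
    (hV : Vᴴ * V = 1) (hVE : V * Vᴴ = matrixUnit (jordanPart Φ) i₀ i₀) : Even m :=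
  _root_.even_of_transpose_eq_neg (hskew (diagUnit i₀)) hV
    ((hΦ.star_apply_diagUnit_mul_self i₀).trans hVE.symm)

end IsTripleMorphism

end TripleMorphismMatrix

/-- a triple morphism from symmetric `n × n` matrices to skew-symmetric
`N × N` matrices has even multiplicity: up to unitaries it is `A ↦ diag_{2k}(A) ⊕ 0`. -/
theorem triple_morphism_symm_to_skew_even (n N : ℕ) (hn : 2 ≤ n)
    (φ : symmSub n →ₗ[ℂ] skewSub N)
    (hφ : ∀ x y z w : symmSub n,
      (w : Matrix (Fin n) (Fin n) ℂ) =
        (1/2 : ℂ) • ((x : Matrix (Fin n) (Fin n) ℂ) * (y : Matrix (Fin n) (Fin n) ℂ)ᴴ *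
            (z : Matrix (Fin n) (Fin n) ℂ) +
          (z : Matrix (Fin n) (Fin n) ℂ) * (y : Matrix (Fin n) (Fin n) ℂ)ᴴ *
            (x : Matrix (Fin n) (Fin n) ℂ)) →
      (φ w : Matrix (Fin N) (Fin N) ℂ) =
        (1/2 : ℂ) • ((φ x : Matrix (Fin N) (Fin N) ℂ) * (φ y : Matrix (Fin N) (Fin N) ℂ)ᴴ *
            (φ z : Matrix (Fin N) (Fin N) ℂ) +
          (φ z : Matrix (Fin N) (Fin N) ℂ) * (φ y : Matrix (Fin N) (Fin N) ℂ)ᴴ *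
            (φ x : Matrix (Fin N) (Fin N) ℂ))) :
    ∃ k : ℕ, 2 * k * n ≤ N ∧
      ∃ U ∈ Matrix.unitaryGroup (Fin N) ℂ, ∃ V ∈ Matrix.unitaryGroup (Fin N) ℂ,
        ∀ A : symmSub n,
          (φ A : Matrix (Fin N) (Fin N) ℂ) =
            U * diagPad N N (2 * k) (A : Matrix (Fin n) (Fin n) ℂ) * V := by
  set Φ := (skewSub N).subtype ∘ₗ φ
  have hΦ : IsTripleMorphism Φ := hφ
  let i₀ : Fin n := ⟨0, by omega⟩
  obtain ⟨m, V, hV, hVE⟩ := exists_isometry_mul_conjTranspose_eq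
    (hΦ.isIdempotentElem_matrixUnit_self i₀) (hΦ.conjTranspose_matrixUnit_jordanPart i₀ i₀)
  obtain ⟨k, rfl⟩ := hΦ.even_of_transpose_eq_neg (fun A => (φ A).2) i₀ hV hVE
  obtain ⟨Y, Z, hY, hZ, hΦYZ⟩ := hΦ.exists_isometries_eq_mul_one_kronecker_mul i₀ hV hVE
  obtain ⟨hle, U, hU, W, hW, hUW⟩ := exists_unitary_mul_diagPad_mul hY hZ
  refine ⟨k, by rwa [two_mul], U, hU, W, hW, fun A => ?_⟩
  rw [two_mul]
  exact (hΦYZ A).trans (hUW A)
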